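/- Let (q_n) be a sequence of real numbers, (k_n) a sequence of nonnegative reals with k_n = o(n), and (τ_n) a sequence of nonnegative integers with τ_n = o(n), and let C ≥ 0. Suppose that for all n, m ∈ ℕ, q_{n+τ_n+m} ≤ q_n + q_m + k_n + C·τ_n. Then the limit of q_n/n as n → ∞ exists in [-∞, +∞) and equals inf_{n} (q_n + k_n + C·τ_n)/(n + τ_n). -/

import Mathlib

/-!
Fix `m`, put `p = m + τ m` and `b = q m + k m + C τ m`. The hypothesis with `n = m` says
`q (p + x) ≤ q x + b`, so `q n - n b / p` is bounded above and `limsup q n / n ≤ b / p`; hence the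
`limsup` is at most the infimum `L`. Conversely `q n ≥ ℓ (n + τ n) - k n - C τ n` for every real
`ℓ < L`, and since `k n` and `τ n` are `o(n)` this gives `liminf q n / n ≥ ℓ`.
-/

open Filter Asymptotics

lemma bddAbove_range_of_add_le {α : Type*} [SemilatticeSup α] {g : ℕ → α} {p : ℕ} (hp : 0 < p)
    (h : ∀ x, g (p + x) ≤ g x) : BddAbove (Set.range g) := by
  let M := (Finset.range p).sup' ⟨0, Finset.mem_range.2 hp⟩ g
  refine ⟨M, Set.forall_mem_range.2 fun n => ?_⟩
  induction n using Nat.strong_induction_on with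
  | _ n ih =>
    by_cases hn : n < p
    · exact Finset.le_sup' g (Finset.mem_range.2 hn)
    · obtain ⟨x, rfl⟩ := Nat.exists_eq_add_of_le (not_lt.1 hn)
      exact (h x).trans (ih x (by omega))

lemma limsup_div_le_of_add_le {q : ℕ → ℝ} {p : ℕ} {b : ℝ} (hp : 0 < p)
    (h : ∀ x, q (p + x) ≤ q x + b) :
    limsup (fun n : ℕ => ((q n / n : ℝ) : EReal)) atTop ≤ ((b / p : ℝ) : EReal) := by
  have hpR : (0 : ℝ) < p := by exact_mod_cast hp
  obtain ⟨M, hM⟩ := bddAbove_range_of_add_le (g := fun n => q n - n * (b / p)) hp fun x => by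
    have : ((p + x : ℕ) : ℝ) * (b / p) = b + x * (b / p) := by push_cast; field_simp
    simp only [this]
    linarith [h x]
  have hbound : ∀ n : ℕ, 1 ≤ n → q n / n ≤ b / p + M / n := fun n hn => by
    have hnR : (0 : ℝ) < n := by exact_mod_cast hn
    rw [div_le_iff₀ hnR, add_mul, div_mul_cancel₀ _ hnR.ne']
    linarith [hM (Set.mem_range_self n)]
  have hlim : Tendsto (fun n : ℕ => b / p + M / n) atTop (nhds (b / p)) := by
    simpa using tendsto_const_nhds.add (tendsto_const_div_atTop_nhds_zero_nat M)
  calc limsup (fun n : ℕ => ((q n / n : ℝ) : EReal)) atTop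
      ≤ limsup (fun n : ℕ => ((b / p + M / n : ℝ) : EReal)) atTop :=
        limsup_le_limsup (eventually_atTop.2 ⟨1, fun n hn => EReal.coe_le_coe (hbound n hn)⟩)
    _ = ((b / p : ℝ) : EReal) := (EReal.tendsto_coe.2 hlim).limsup_eq

lemma le_liminf_div_of_le_div {q k : ℕ → ℝ} {τ : ℕ → ℕ} {C ℓ : ℝ}
    (hk : (fun n => k n) =o[atTop] (fun n => (n : ℝ)))
    (hτ : (fun n => (τ n : ℝ)) =o[atTop] (fun n => (n : ℝ)))
    (hℓ : ∀ᶠ n in atTop, ℓ ≤ (q n + k n + C * τ n) / (n + τ n)) :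
    (ℓ : EReal) ≤ liminf (fun n : ℕ => ((q n / n : ℝ) : EReal)) atTop := by
  have herr : (fun n => ℓ * τ n - k n - C * τ n) =o[atTop] (fun n => (n : ℝ)) :=
    ((hτ.const_mul_left ℓ).sub hk).sub (hτ.const_mul_left C)
  have hlim : Tendsto (fun n : ℕ => ℓ + (ℓ * τ n - k n - C * τ n) / n) atTop (nhds ℓ) := by
    simpa using tendsto_const_nhds.add herr.tendsto_div_nhds_zero
  have hbound : ∀ᶠ n : ℕ in atTop, ℓ + (ℓ * τ n - k n - C * τ n) / n ≤ q n / n := by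
    filter_upwards [hℓ, eventually_ge_atTop 1] with n hn h1
    have hnR : (0 : ℝ) < n := by exact_mod_cast h1
    rw [le_div_iff₀ (by positivity)] at hn
    rw [add_div' _ _ _ hnR.ne', div_le_div_iff_of_pos_right hnR]
    linarith
  calc (ℓ : EReal)
      = liminf (fun n : ℕ => ((ℓ + (ℓ * τ n - k n - C * τ n) / n : ℝ) : EReal)) atTop :=
        (EReal.tendsto_coe.2 hlim).liminf_eq.symm
    _ ≤ liminf (fun n : ℕ => ((q n / n : ℝ) : EReal)) atTop :=
        liminf_le_liminf (hbound.mono fun n hn => EReal.coe_le_coe hn)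

theorem stmt1_general (q : ℕ → ℝ) (k : ℕ → ℝ) (τ : ℕ → ℕ) (C : ℝ)
    (hk : (fun n => k n) =o[atTop] (fun n => (n : ℝ)))
    (hτ : (fun n => (τ n : ℝ)) =o[atTop] (fun n => (n : ℝ)))
    (hsub : ∀ n m : ℕ, q (n + τ n + m) ≤ q n + q m + k n + C * τ n) :
    Tendsto (fun n : ℕ => ((q n / n : ℝ) : EReal)) atTop
      (nhds (⨅ n : ℕ,
        (((q (n + 1) + k (n + 1) + C * τ (n + 1)) / ((n + 1 : ℕ) + τ (n + 1) : ℝ) : ℝ) : EReal))) := by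
  refine tendsto_of_le_liminf_of_limsup_le ?_ (le_iInf fun m => ?_)
  · refine EReal.ge_of_forall_gt_iff_ge.1 fun ℓ hℓ => le_liminf_div_of_le_div (C := C) hk hτ ?_
    filter_upwards [eventually_ge_atTop 1] with n hn
    obtain ⟨m, rfl⟩ := Nat.exists_eq_add_of_le' hn
    simpa using EReal.coe_le_coe_iff.1 (hℓ.le.trans (iInf_le _ m))
  · have h := limsup_div_le_of_add_le (q := q) (p := m + 1 + τ (m + 1))
      (b := q (m + 1) + k (m + 1) + C * τ (m + 1)) (by omega)
      fun x => by linarith [hsub (m + 1) x]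
    simpa using h

theorem stmt1 (q : ℕ → ℝ) (k : ℕ → ℝ) (τ : ℕ → ℕ) (C : ℝ)
    (hk0 : ∀ n, 0 ≤ k n)
    (hk : (fun n => k n) =o[atTop] (fun n => (n : ℝ)))
    (hτ : (fun n => (τ n : ℝ)) =o[atTop] (fun n => (n : ℝ)))
    (hC : 0 ≤ C)
    (hsub : ∀ n m : ℕ, q (n + τ n + m) ≤ q n + q m + k n + C * τ n) :
    Tendsto (fun n : ℕ => ((q n / n : ℝ) : EReal)) atTop
      (nhds (⨅ n : ℕ,
        (((q (n + 1) + k (n + 1) + C * τ (n + 1)) / ((n + 1 : ℕ) + τ (n + 1) : ℝ) : ℝ) : EReal))) :=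
  stmt1_general q k τ C hk hτ hsub
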